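/- Let A be a real central hyperplane arrangement with fundamental chamber c₀ such that every biclosed subset of A is the separation set of some chamber. If π: H₁,...,H_N is an admissible permutation of A (for each codimension-2 subspace X, the induced order on A_X is the crossing order of some reduced gallery of A_X from (c₀)_X to −(c₀)_X), then there exists a reduced gallery c₀ = d₀ < d₁ < ... < d_N = −c₀ with S(d_{i−1}, d_i) = {H_i} for all i. -/

import Mathlib

open Matrix
open scoped Classical

/-- Ambient space: `ℝⁿ`. -/
abbrev V (n : ℕ) := Fin n → ℝ

/-- The linear functional `x ↦ v ⬝ᵥ x` determined by a normal vector. -/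
def hypl {n : ℕ} (v : V n) : V n →ₗ[ℝ] ℝ where
  toFun x := v ⬝ᵥ x
  map_add' x y := by simp [dotProduct_add]
  map_smul' c x := by simp [dotProduct_smul]

/-- Two normal vectors define the same hyperplane. -/
def SameHyp {n : ℕ} (u w : V n) : Prop := ∀ x, u ⬝ᵥ x = 0 ↔ w ⬝ᵥ x = 0

/-- A finite set of normal vectors represents a (central) hyperplane arrangement
if each normal is nonzero and distinct normals define distinct hyperplanes. -/
def IsArrangement {n : ℕ} (A : Finset (V n)) : Prop :=
  (∀ v ∈ A, v ≠ 0) ∧ ∀ u ∈ A, ∀ w ∈ A, SameHyp u w → u = w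

/-- The point `x` realizes the sign vector `c` on the arrangement `A`. -/
def Realizes {n : ℕ} (A : Finset (V n)) (c : V n → Bool) (x : V n) : Prop :=
  ∀ v ∈ A, if c v then 0 < v ⬝ᵥ x else v ⬝ᵥ x < 0

/-- A chamber of `A`, encoded by its sign vector. -/
def IsChamber {n : ℕ} (A : Finset (V n)) (c : V n → Bool) : Prop :=
  ∃ x, Realizes A c x

/-- The separation set of two chambers: hyperplanes on which their signs differ. -/
noncomputable def SepSet {n : ℕ} (A : Finset (V n)) (c d : V n → Bool) : Finset (V n) :=
  A.filter (fun v => c v ≠ d v)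

/-- The localization of `A` at the subspace `ker u ∩ ker w`:
hyperplanes containing this subspace. -/
noncomputable def loc {n : ℕ} (A : Finset (V n)) (u w : V n) : Finset (V n) :=
  A.filter (fun v => ∀ x, u ⬝ᵥ x = 0 → w ⬝ᵥ x = 0 → v ⬝ᵥ x = 0)

/-- `u, w` span a codimension-2 intersection subspace `ker u ∩ ker w` of `A`. -/
def Codim2 {n : ℕ} (A : Finset (V n)) (u w : V n) : Prop :=
  u ∈ A ∧ w ∈ A ∧ LinearIndependent ℝ ![u, w]

/-- `I` is biclosed w.r.t. the chamber `c₀`: its intersection with each rank-2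
localization is the separation set of some chamber of the localization. -/
def IsBiclosed {n : ℕ} (A : Finset (V n)) (c₀ : V n → Bool) (I : Finset (V n)) : Prop :=
  ∀ u w, Codim2 A u w →
    ∃ d, IsChamber (loc A u w) d ∧ I ∩ loc A u w = SepSet (loc A u w) c₀ d

/-- `I ⊆ A` is convex with respect to `c₀`. -/
def IsConvex {n : ℕ} (A : Finset (V n)) (c₀ : V n → Bool) (I : Finset (V n)) : Prop :=
  ∀ H ∈ A \ I, ∃ e, IsChamber A e ∧ H ∈ SepSet A c₀ e ∧ SepSet A c₀ e ⊆ A \ I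

/-- `I` is 2-closed: its intersection with each rank-2 localization is convex there. -/
def Is2Closed {n : ℕ} (A : Finset (V n)) (c₀ : V n → Bool) (I : Finset (V n)) : Prop :=
  ∀ u w, Codim2 A u w → IsConvex (loc A u w) c₀ (I ∩ loc A u w)

/-- `v` is a wall of the chamber `c`: some point of the closure of `c` lies on the
hyperplane of `v` and strictly off every other hyperplane of `A`. -/
def IsWall {n : ℕ} (A : Finset (V n)) (c : V n → Bool) (v : V n) : Prop :=
  v ∈ A ∧ ∃ x, v ⬝ᵥ x = 0 ∧ ∀ w ∈ A, ¬ SameHyp v w →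
    (if c w then 0 < w ⬝ᵥ x else w ⬝ᵥ x < 0)

/-- The sign vector `v` is feasible: some point satisfies all its strict constraints. -/
def Feasible {n : ℕ} (A : Finset (V n)) (v : V n → SignType) : Prop :=
  ∃ x : V n, ∀ h ∈ A, (v h = 1 → 0 < h ⬝ᵥ x) ∧ (v h = -1 → h ⬝ᵥ x < 0)

/-- A circuit of `A`: a minimal nonzero infeasible sign vector supported on `A`. -/
def IsCircuit {n : ℕ} (A : Finset (V n)) (v : V n → SignType) : Prop :=
  (∀ h, v h ≠ 0 → h ∈ A) ∧ (∃ h, v h ≠ 0) ∧ ¬ Feasible A v ∧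
    ∀ w : V n → SignType, (∀ h, w h ≠ 0 → w h = v h) →
      {h | w h ≠ 0} ⊂ {h | v h ≠ 0} → Feasible A w

/-- A reduced gallery from `c₀` to `-c₀` in `A`, crossing hyperplanes `H 0, H 1, …`
in order. -/
def IsGallery {n N : ℕ} (A : Finset (V n)) (c₀ : V n → Bool) (H : Fin N → V n)
    (d : Fin (N + 1) → V n → Bool) : Prop :=
  (∀ i, IsChamber A (d i)) ∧ d 0 = c₀ ∧ (∀ v ∈ A, d (Fin.last N) v = !c₀ v) ∧
    ∀ i : Fin N, SepSet A (d i.castSucc) (d i.succ) = {H i}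

/-- The enumeration `H` of `A` is admissible: on every rank-2 localization, the
induced order is the crossing order of some reduced gallery of the localization. -/
def Admissible {n N : ℕ} (A : Finset (V n)) (c₀ : V n → Bool) (H : Fin N → V n) : Prop :=
  ∀ u w, Codim2 A u w →
    ∃ (M : ℕ) (G : Fin M → V n) (e : Fin (M + 1) → V n → Bool) (φ : Fin M → Fin N),
      IsGallery (loc A u w) c₀ G e ∧ StrictMono φ ∧ ∀ k, G k = H (φ k)

/-- The intersection lattice of `A`, as a set of subspaces of `ℝⁿ`. -/
def InterLattice {n : ℕ} (A : Finset (V n)) : Set (Submodule ℝ (V n)) :=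
  {X | ∃ S : Finset (V n), S ⊆ A ∧ X = S.inf (fun v => LinearMap.ker (hypl v))}

/-- A modular element of the intersection lattice of `A`. -/
def IsModular {n : ℕ} (A : Finset (V n)) (X : Submodule ℝ (V n)) : Prop :=
  X ∈ InterLattice A ∧ ∀ Y ∈ InterLattice A, X ⊔ Y ∈ InterLattice A

/-- The rank of the arrangement `A`. -/
noncomputable def rankA {n : ℕ} (A : Finset (V n)) : ℕ :=
  Module.finrank ℝ (Submodule.span ℝ (A : Set (V n)))

/-- A modular flag: a maximal chain `⊤ = X 0 > X 1 > ⋯ > X r` of modular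
elements of the intersection lattice, with `X i` of codimension `i`. -/
def IsModularFlag {n : ℕ} (A : Finset (V n)) (X : Fin (rankA A + 1) → Submodule ℝ (V n)) : Prop :=
  X 0 = ⊤ ∧ (∀ i, IsModular A (X i)) ∧ (∀ i j, i ≤ j → X j ≤ X i) ∧
    ∀ i : Fin (rankA A + 1), Module.finrank ℝ (X i) = n - (i : ℕ)

/-- `A` is supersolvable: its intersection lattice has a modular flag. -/
def IsSupersolvable {n : ℕ} (A : Finset (V n)) : Prop :=
  ∃ X : Fin (rankA A + 1) → Submodule ℝ (V n), IsModularFlag A X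

/-- The chamber `c` is incident to the subspace `X`:  some point of `X` lies in the
closure of `c` and strictly off every hyperplane of `A` not containing `X`. -/
def IncidentSub {n : ℕ} (A : Finset (V n)) (c : V n → Bool) (X : Submodule ℝ (V n)) : Prop :=
  ∃ x, x ∈ X ∧ ∀ v ∈ A, ¬ X ≤ LinearMap.ker (hypl v) →
    (if c v then 0 < v ⬝ᵥ x else v ⬝ᵥ x < 0)

/-- The chamber `c` is incident to the codimension-2 subspace `ker u ∩ ker w`. -/
def IncidentLoc {n : ℕ} (A : Finset (V n)) (c : V n → Bool) (u w : V n) : Prop :=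
  ∃ x, (∀ v ∈ loc A u w, v ⬝ᵥ x = 0) ∧ ∀ v ∈ A, v ∉ loc A u w →
    (if c v then 0 < v ⬝ᵥ x else v ⬝ᵥ x < 0)

/-- `(A, c₀)` is bineighborly: any chamber is incident to the intersection of any two
of its walls separating it from `-c₀`. -/
def Bineighborly {n : ℕ} (A : Finset (V n)) (c₀ : V n → Bool) : Prop :=
  ∀ c, IsChamber A c → ∀ u w, IsWall A c u → IsWall A c w →
    u ∈ SepSet A c (fun v => !c₀ v) → w ∈ SepSet A c (fun v => !c₀ v) → IncidentLoc A c u w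

/-- Every chamber of `A` is a simplicial cone: its walls are linearly independent
and span the same subspace as `A`. -/
def IsSimplicial {n : ℕ} (A : Finset (V n)) : Prop :=
  ∀ c, IsChamber A c →
    LinearIndependent ℝ ((↑) : {v // IsWall A c v} → V n) ∧
      Submodule.span ℝ {v | IsWall A c v} = Submodule.span ℝ (A : Set (V n))

/-! The candidate gallery consists of the sign vectors obtained from `c₀` by reversing the signs
on the initial segments `{H 0, …, H (j-1)}` of the admissible order. On a rank-2 localization
such a segment is an initial segment of the crossing order of a reduced gallery of the
localization, hence the separation set of one of its chambers: the segment is biclosed. By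
hypothesis it is then the separation set of a chamber of `A`, and consecutive chambers differ
exactly in `H i`. -/

section SignVectors

variable {n : ℕ}

@[simp]
lemma mem_sepSet {A : Finset (V n)} {c d : V n → Bool} {v : V n} :
    v ∈ SepSet A c d ↔ v ∈ A ∧ c v ≠ d v :=
  Finset.mem_filter

lemma sepSet_eq_symmDiff (A : Finset (V n)) (c d e : V n → Bool) :
    SepSet A c e = symmDiff (SepSet A c d) (SepSet A d e) := by
  ext v
  simp only [mem_sepSet, Finset.mem_symmDiff]
  cases c v <;> cases d v <;> cases e v <;> tauto

lemma IsChamber.congr {A : Finset (V n)} {c d : V n → Bool} (hc : IsChamber A c)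
    (hcd : ∀ v ∈ A, c v = d v) : IsChamber A d := by
  obtain ⟨x, hx⟩ := hc
  exact ⟨x, fun v hv => hcd v hv ▸ hx v hv⟩

noncomputable def flipOn (c : V n → Bool) (I : Finset (V n)) : V n → Bool :=
  fun v => if v ∈ I then !c v else c v

lemma flipOn_eq_of_sepSet_eq {A I : Finset (V n)} {c d : V n → Bool} (h : SepSet A c d = I)
    {v : V n} (hv : v ∈ A) : flipOn c I v = d v := by
  subst h
  cases hc : c v <;> cases hd : d v <;> simp [flipOn, hv, hc, hd]

lemma sepSet_flipOn_insert {A I : Finset (V n)} (c : V n → Bool) {a : V n} (ha : a ∈ A)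
    (haI : a ∉ I) : SepSet A (flipOn c I) (flipOn c (insert a I)) = {a} := by
  ext v
  by_cases hva : v = a
  · subst hva
    simp [flipOn, ha, haI]
  · simp [flipOn, hva]

end SignVectors

lemma Fin.mem_iff_lt_card_of_isLowerSet {M : ℕ} {S : Finset (Fin M)}
    (hS : IsLowerSet (S : Set (Fin M))) (k : Fin M) : k ∈ S ↔ (k : ℕ) < S.card := by
  rcases hS.eq_univ_or_Iio with h | ⟨a, h⟩
  · rw [Finset.coe_eq_univ.1 h]
    simp
  · rw [← Finset.coe_Iio, Finset.coe_inj] at h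
    subst h
    rw [Finset.mem_Iio, Fin.card_Iio, Fin.lt_def]

section InitSeg

variable {α : Type*} [DecidableEq α] {N : ℕ}

noncomputable def initSeg (H : Fin N → α) (j : ℕ) : Finset α :=
  (Finset.univ.filter fun i : Fin N => (i : ℕ) < j).image H

@[simp]
lemma mem_initSeg {H : Fin N → α} {j : ℕ} {a : α} :
    a ∈ initSeg H j ↔ ∃ i : Fin N, (i : ℕ) < j ∧ H i = a := by
  simp [initSeg]

lemma initSeg_zero (H : Fin N → α) : initSeg H 0 = ∅ := by
  ext; simp

lemma initSeg_of_le (H : Fin N → α) {j : ℕ} (hj : N ≤ j) : initSeg H j = Finset.univ.image H := by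
  ext a
  simp only [mem_initSeg, Finset.mem_image, Finset.mem_univ, true_and]
  exact exists_congr fun i => and_iff_right (by omega)

lemma initSeg_succ (H : Fin N → α) (i : Fin N) :
    initSeg H (i + 1) = insert (H i) (initSeg H i) := by
  ext a
  simp only [mem_initSeg, Finset.mem_insert]
  constructor
  · rintro ⟨k, hk, rfl⟩
    rcases Nat.lt_succ_iff_lt_or_eq.1 hk with hk | hk
    · exact Or.inr ⟨k, hk, rfl⟩
    · exact Or.inl (by rw [Fin.ext hk])
  · rintro (rfl | ⟨k, hk, rfl⟩)
    · exact ⟨i, by omega, rfl⟩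
    · exact ⟨k, by omega, rfl⟩

lemma self_notMem_initSeg {H : Fin N → α} (hH : Function.Injective H) (i : Fin N) :
    H i ∉ initSeg H i := by
  intro h
  obtain ⟨k, hk, hki⟩ := mem_initSeg.1 h
  rw [hH hki] at hk
  exact lt_irrefl _ hk

lemma initSeg_subset {H : Fin N → α} {A : Finset α} (hH : ∀ i, H i ∈ A) (j : ℕ) :
    initSeg H j ⊆ A := by
  intro a ha
  obtain ⟨i, -, rfl⟩ := mem_initSeg.1 ha
  exact hH i

lemma initSeg_inter_image_comp {M : ℕ} {H : Fin N → α} (hH : Function.Injective H)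
    {φ : Fin M → Fin N} (hφ : StrictMono φ) (j : ℕ) :
    initSeg H j ∩ Finset.univ.image (H ∘ φ) =
      initSeg (H ∘ φ) (Finset.univ.filter fun k => (φ k : ℕ) < j).card := by
  have hlower : IsLowerSet ((Finset.univ.filter fun k => (φ k : ℕ) < j : Finset (Fin M)) :
      Set (Fin M)) := fun k k' hk'k hk => by
    simp only [Finset.coe_filter, Finset.mem_univ, true_and, Set.mem_ofPred_eq] at hk ⊢
    exact lt_of_le_of_lt (hφ.monotone hk'k) hk
  ext a
  simp only [Finset.mem_inter, mem_initSeg, Finset.mem_image, Finset.mem_univ, true_and,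
    Function.comp_apply, ← Fin.mem_iff_lt_card_of_isLowerSet hlower, Finset.mem_filter]
  constructor
  · rintro ⟨⟨i, hi, rfl⟩, k, hk⟩
    exact ⟨k, hH hk ▸ hi, hk⟩
  · rintro ⟨k, hk, rfl⟩
    exact ⟨⟨φ k, hk, rfl⟩, k, rfl⟩

end InitSeg

namespace IsGallery

variable {n M : ℕ} {B : Finset (V n)} {c₀ : V n → Bool} {G : Fin M → V n}
  {e : Fin (M + 1) → V n → Bool}

lemma sepSet_eq_initSeg (hg : IsGallery B c₀ G e) (hG : Function.Injective G)
    (t : Fin (M + 1)) : SepSet B c₀ (e t) = initSeg G t := by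
  induction t using Fin.induction with
  | zero =>
    rw [hg.2.1, Fin.val_zero, initSeg_zero]
    ext; simp
  | succ i ih =>
    rw [sepSet_eq_symmDiff B c₀ (e i.castSucc), ih, hg.2.2.2 i, Fin.val_castSucc, Fin.val_succ,
      initSeg_succ, Finset.insert_eq, Finset.union_comm, ← Finset.sup_eq_union,
      Disjoint.symmDiff_eq_sup (Finset.disjoint_singleton_right.2 (self_notMem_initSeg hG i))]

lemma eq_image (hg : IsGallery B c₀ G e) (hG : Function.Injective G) :
    B = Finset.univ.image G := by
  have hlast : SepSet B c₀ (e (Fin.last M)) = B := by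
    ext v
    simp only [mem_sepSet, and_iff_left_iff_imp]
    intro hv
    simp [hg.2.2.1 v hv]
  rw [← hlast, hg.sepSet_eq_initSeg hG, initSeg_of_le G (by simp)]

end IsGallery

lemma Admissible.isBiclosed_initSeg {n N : ℕ} {A : Finset (V n)} {c₀ : V n → Bool}
    {H : Fin N → V n} (hadm : Admissible A c₀ H) (hH : Function.Injective H) (j : ℕ) :
    IsBiclosed A c₀ (initSeg H j) := by
  intro u w huw
  obtain ⟨M, G, e, φ, hg, hφ, hGH⟩ := hadm u w huw
  obtain rfl : G = H ∘ φ := funext hGH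
  have hG : Function.Injective (H ∘ φ) := hH.comp hφ.injective
  have hm : (Finset.univ.filter fun k => (φ k : ℕ) < j).card < M + 1 :=
    Nat.lt_succ_of_le ((Finset.card_filter_le _ _).trans (by simp))
  refine ⟨e ⟨_, hm⟩, hg.1 _, ?_⟩
  rw [hg.sepSet_eq_initSeg hG, hg.eq_image hG, initSeg_inter_image_comp hH hφ]

theorem admissible_order_yields_gallery_general {n : ℕ} (A : Finset (V n))
    (c₀ : V n → Bool)
    (hbic : ∀ I ⊆ A, IsBiclosed A c₀ I → ∃ c, IsChamber A c ∧ I = SepSet A c₀ c)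
    (N : ℕ) (hN : N = A.card) (H : Fin N → V n) (hmem : ∀ i, H i ∈ A)
    (hinj : Function.Injective H) (hadm : Admissible A c₀ H) :
    ∃ d : Fin (N + 1) → V n → Bool, IsGallery A c₀ H d := by
  have hchamber : ∀ j, IsChamber A (flipOn c₀ (initSeg H j)) := fun j => by
    obtain ⟨c, hc, hsep⟩ := hbic _ (initSeg_subset hmem j) (hadm.isBiclosed_initSeg hinj j)
    exact hc.congr fun v hv => (flipOn_eq_of_sepSet_eq hsep.symm hv).symm
  have himage : Finset.univ.image H = A :=
    Finset.eq_of_subset_of_card_le (Finset.image_subset_iff.2 fun i _ => hmem i)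
      (by rw [Finset.card_image_of_injective _ hinj, Finset.card_univ, Fintype.card_fin, hN])
  refine ⟨fun j => flipOn c₀ (initSeg H j), fun j => hchamber j, ?_, ?_, fun i => ?_⟩
  · funext v
    simp [initSeg_zero, flipOn]
  · intro v hv
    simp [flipOn, initSeg_of_le H le_rfl, himage, hv]
  · simpa [initSeg_succ] using sepSet_flipOn_insert c₀ (hmem i) (self_notMem_initSeg hinj i)

theorem admissible_order_yields_gallery {n : ℕ} (A : Finset (V n)) (hA : IsArrangement A)
    (c₀ : V n → Bool) (hc₀ : IsChamber A c₀)
    (hbic : ∀ I ⊆ A, IsBiclosed A c₀ I → ∃ c, IsChamber A c ∧ I = SepSet A c₀ c)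
    (N : ℕ) (hN : N = A.card) (H : Fin N → V n) (hmem : ∀ i, H i ∈ A)
    (hinj : Function.Injective H) (hadm : Admissible A c₀ H) :
    ∃ d : Fin (N + 1) → V n → Bool, IsGallery A c₀ H d :=
  admissible_order_yields_gallery_general A c₀ hbic N hN H hmem hinj hadm
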